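/- Let Λ be a CPTP map on a finite-dimensional Hilbert space H such that for every pure state |φ⟩⟨φ|, Λ[|φ⟩⟨φ|] = |φ⟩⟨φ| ⊗ σ_φ for some density operator σ_φ on H_aux (universal perfect faithfulness). Then for every density operator ρ, tr(Λ[ρ]²) ≤ tr(ρ²), i.e., Λ does not increase the purity of any state. -/

import Mathlib

open Matrix Kronecker BigOperators
open scoped ComplexOrder

/-- Trace distance/norm with factor 1/2: `‖A‖ = ½ tr √(AᴴA)`. -/
noncomputable def trNorm {m : Type*} [Fintype m] [DecidableEq m] (A : Matrix m m ℂ) : ℝ :=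
  (1 / 2) * (((Matrix.posSemidef_conjTranspose_mul_self A).1.eigenvectorUnitary : Matrix m m ℂ) *
    diagonal (((↑) : ℝ → ℂ) ∘ (√·) ∘ (Matrix.posSemidef_conjTranspose_mul_self A).1.eigenvalues) *
    (star (Matrix.posSemidef_conjTranspose_mul_self A).1.eigenvectorUnitary : Matrix m m ℂ)).trace.re

/-- A density operator: positive semidefinite with unit trace. -/
def IsDensity {m : Type*} [Fintype m] (ρ : Matrix m m ℂ) : Prop :=
  ρ.PosSemidef ∧ ρ.trace = 1

/-- A pure state: a density operator that is a (rank-one) projector. -/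
def IsPureState {m : Type*} [Fintype m] (ρ : Matrix m m ℂ) : Prop :=
  IsDensity ρ ∧ ρ * ρ = ρ

/-- Completely positive trace-preserving map, via a Kraus representation. -/
def IsCPTP {m p : Type*} [Fintype m] [DecidableEq m] [Fintype p]
    (Λ : Matrix m m ℂ →ₗ[ℂ] Matrix p p ℂ) : Prop :=
  ∃ (ι : Type) (s : Finset ι) (K : ι → Matrix p m ℂ),
    (∀ ρ, Λ ρ = ∑ i ∈ s, K i * ρ * (K i)ᴴ) ∧ ∑ i ∈ s, (K i)ᴴ * K i = 1

/-- Partial trace over the second (auxiliary) tensor factor. -/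
noncomputable def ptraceB {m b : Type*} [Fintype b] (ρ : Matrix (m × b) (m × b) ℂ) :
    Matrix m m ℂ :=
  Matrix.of fun i j => ∑ k : b, ρ (i, k) (j, k)

/-- The projector `|χ⟩⟨χ|` onto the vector `χ`. -/
noncomputable def pureProj {m : Type*} (χ : m → ℂ) : Matrix m m ℂ :=
  Matrix.vecMulVec χ (star χ)

/-- `χ` lies in the range of `ρ`. -/
def inRange {m : Type*} [Fintype m] (ρ : Matrix m m ℂ) (χ : m → ℂ) : Prop :=
  ∃ v, ρ *ᵥ v = χ

/-- Worst-case distinguishability: infimum of trace distances of pure states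
taken from the ranges of `ρ` and `ρ'`. -/
noncomputable def wcd {m : Type*} [Fintype m] [DecidableEq m] (ρ ρ' : Matrix m m ℂ) : ℝ :=
  sInf { d : ℝ | ∃ χ χ' : m → ℂ, inRange ρ χ ∧ inRange ρ' χ' ∧
    star χ ⬝ᵥ χ = 1 ∧ star χ' ⬝ᵥ χ' = 1 ∧ d = trNorm (pureProj χ - pureProj χ') }

/-!
Diagonalise `ρ = ∑ᵢ pᵢ |λᵢ⟩⟨λᵢ|`. By linearity and faithfulness, `Λ ρ = ∑ᵢ pᵢ |λᵢ⟩⟨λᵢ| ⊗ σᵢ`, and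
orthonormality of the `λᵢ` kills the cross terms of both squares, so
`tr (Λ ρ)² = ∑ᵢ pᵢ² tr σᵢ² ≤ ∑ᵢ pᵢ² = tr ρ²` because every density operator has purity at most one.
-/

namespace Matrix

variable {m a ι : Type*} [Fintype m] [Fintype a] [Fintype ι]

theorem trace_sum_mul_sum_of_pairwise {R : Type*} [Semiring R] (X : ι → Matrix m m R)
    (h : Pairwise fun i j => (X i * X j).trace = 0) :
    ((∑ i, X i) * ∑ i, X i).trace = ∑ i, (X i * X i).trace := by
  classical
  rw [Finset.sum_mul_sum, trace_sum]
  refine Finset.sum_congr rfl fun i _ => ?_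
  rw [trace_sum, Finset.sum_eq_single i (fun j _ hji => h hji.symm) (by simp)]

theorem trace_pureProj_mul_pureProj (u v : m → ℂ) :
    (pureProj u * pureProj v).trace = (star u ⬝ᵥ v) * (star v ⬝ᵥ u) := by
  rw [pureProj, pureProj, vecMulVec_mul_vecMulVec, trace_vecMulVec, dotProduct_smul,
    smul_eq_mul, dotProduct_comm u]

variable [DecidableEq ι] {u : ι → m → ℂ}

omit [Fintype ι] in
theorem trace_pureProj_mul_pureProj_of_orthonormal
    (hu : ∀ i j, star (u i) ⬝ᵥ u j = if i = j then 1 else 0) (i j : ι) :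
    (pureProj (u i) * pureProj (u j)).trace = if i = j then 1 else 0 := by
  rw [trace_pureProj_mul_pureProj, hu, hu]
  split_ifs <;> simp_all

theorem trace_sum_smul_pureProj_mul_self (hu : ∀ i j, star (u i) ⬝ᵥ u j = if i = j then 1 else 0)
    (c : ι → ℂ) :
    ((∑ i, c i • pureProj (u i)) * ∑ i, c i • pureProj (u i)).trace = ∑ i, c i ^ 2 := by
  have hu' := trace_pureProj_mul_pureProj_of_orthonormal hu
  rw [trace_sum_mul_sum_of_pairwise]
  · simp [smul_mul_smul_comm, hu', sq]
  · intro i j hij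
    simp [smul_mul_smul_comm, hu', hij]

theorem trace_sum_smul_pureProj_kronecker_mul_self
    (hu : ∀ i j, star (u i) ⬝ᵥ u j = if i = j then 1 else 0) (c : ι → ℂ) (A : ι → Matrix a a ℂ) :
    ((∑ i, c i • (pureProj (u i) ⊗ₖ A i)) * ∑ i, c i • (pureProj (u i) ⊗ₖ A i)).trace =
      ∑ i, c i ^ 2 * (A i * A i).trace := by
  have hu' := trace_pureProj_mul_pureProj_of_orthonormal hu
  rw [trace_sum_mul_sum_of_pairwise]
  · simp [smul_mul_smul_comm, ← mul_kronecker_mul, trace_kronecker, hu', sq]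
  · intro i j hij
    simp [smul_mul_smul_comm, ← mul_kronecker_mul, trace_kronecker, hu', hij]

namespace IsHermitian

variable [DecidableEq m] {A : Matrix m m ℂ}

theorem star_eigenvectorBasis_dotProduct (hA : A.IsHermitian) (i j : m) :
    star ⇑(hA.eigenvectorBasis i) ⬝ᵥ ⇑(hA.eigenvectorBasis j) = if i = j then 1 else 0 := by
  rw [dotProduct_comm, ← EuclideanSpace.inner_eq_star_dotProduct]
  exact orthonormal_iff_ite.mp hA.eigenvectorBasis.orthonormal i j

theorem eq_sum_smul_pureProj (hA : A.IsHermitian) :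
    A = ∑ i, (hA.eigenvalues i : ℂ) • pureProj ⇑(hA.eigenvectorBasis i) := by
  conv_lhs => rw [hA.spectral_theorem, Unitary.conjStarAlgAut_apply]
  ext k l
  simp only [Matrix.mul_apply, Matrix.sum_apply, Matrix.diagonal_apply, Function.comp_apply,
    Matrix.smul_apply, pureProj, vecMulVec_apply, Pi.star_apply, smul_eq_mul,
    eigenvectorUnitary_apply, Matrix.star_apply, RCLike.star_def, mul_ite, mul_zero,
    Finset.sum_ite_eq', Finset.mem_univ, if_true]
  refine Finset.sum_congr rfl fun i _ => ?_
  rw [mul_right_comm, mul_comm]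
  rfl

theorem trace_mul_self (hA : A.IsHermitian) :
    (A * A).trace = ∑ i, (hA.eigenvalues i : ℂ) ^ 2 := by
  conv_lhs => rw [hA.eq_sum_smul_pureProj]
  exact trace_sum_smul_pureProj_mul_self hA.star_eigenvectorBasis_dotProduct _

end IsHermitian

end Matrix

theorem IsDensity.re_trace_mul_self_le_one {m : Type*} [Fintype m] {σ : Matrix m m ℂ}
    (hσ : IsDensity σ) : (σ * σ).trace.re ≤ 1 := by
  classical
  obtain ⟨hpsd, htr⟩ := hσ
  have hsum : ∑ i, hpsd.1.eigenvalues i = 1 := by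
    apply RCLike.ofReal_injective (K := ℂ)
    rw [RCLike.ofReal_sum, ← hpsd.1.trace_eq_sum_eigenvalues, htr, RCLike.ofReal_one]
  rw [hpsd.1.trace_mul_self, ← hsum]
  simp only [Complex.re_sum, ← Complex.ofReal_pow, Complex.ofReal_re]
  refine Finset.sum_le_sum fun i _ => ?_
  rw [sq]
  exact mul_le_of_le_one_right (hpsd.eigenvalues_nonneg i)
    (hsum ▸ Finset.single_le_sum (fun j _ => hpsd.eigenvalues_nonneg j) (Finset.mem_univ i))

theorem universal_faithful_no_purity_increase_general {n a : Type*} [Fintype n] [DecidableEq n]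
    [Fintype a]
    (Λ : Matrix n n ℂ →ₗ[ℂ] Matrix (n × a) (n × a) ℂ)
    (hfaith : ∀ φ : n → ℂ, star φ ⬝ᵥ φ = 1 →
      ∃ σ : Matrix a a ℂ, IsDensity σ ∧ Λ (pureProj φ) = pureProj φ ⊗ₖ σ) :
    ∀ ρ : Matrix n n ℂ, IsDensity ρ → ((Λ ρ * Λ ρ).trace).re ≤ ((ρ * ρ).trace).re := by
  intro ρ hρ
  have hρ_herm := hρ.1.1
  have hu := hρ_herm.star_eigenvectorBasis_dotProduct
  choose σ hσ hΛ using fun i => hfaith _ ((hu i i).trans (if_pos rfl))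
  have hΛρ : Λ ρ = ∑ i, (hρ_herm.eigenvalues i : ℂ) •
      (pureProj ⇑(hρ_herm.eigenvectorBasis i) ⊗ₖ σ i) := by
    conv_lhs => rw [hρ_herm.eq_sum_smul_pureProj]
    simp only [map_sum, map_smul, hΛ]
  rw [hΛρ, trace_sum_smul_pureProj_kronecker_mul_self hu, hρ_herm.trace_mul_self,
    Complex.re_sum, Complex.re_sum]
  refine Finset.sum_le_sum fun i _ => ?_
  rw [← Complex.ofReal_pow, Complex.re_ofReal_mul, Complex.ofReal_re]
  exact mul_le_of_le_one_right (sq_nonneg _) (hσ i).re_trace_mul_self_le_one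

/-- A universally perfectly faithful CPTP map (sending each pure state
`|φ⟩⟨φ|` to `|φ⟩⟨φ| ⊗ σ_φ`) does not increase the purity `tr(ρ²)` of any state. -/
theorem universal_faithful_no_purity_increase {n a : Type*} [Fintype n] [DecidableEq n]
    [Fintype a]
    (Λ : Matrix n n ℂ →ₗ[ℂ] Matrix (n × a) (n × a) ℂ)
    (hCPTP : IsCPTP Λ)
    (hfaith : ∀ φ : n → ℂ, star φ ⬝ᵥ φ = 1 →
      ∃ σ : Matrix a a ℂ, IsDensity σ ∧ Λ (pureProj φ) = pureProj φ ⊗ₖ σ) :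
    ∀ ρ : Matrix n n ℂ, IsDensity ρ → ((Λ ρ * Λ ρ).trace).re ≤ ((ρ * ρ).trace).re :=
  universal_faithful_no_purity_increase_general Λ hfaith
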